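/- Let L be the left partial H-module algebra with action h ⇀ x = λ(h)x (λ : H → k with λ(1) = 1 and λ(h)λ(g) = Σ λ(h₁)λ(h₂g)) and let H be the right partial L-comodule coalgebra with coaction ρ(h) = h ⊗ z (z ∈ L with ε_L(z) = 1 and z ⊗ z = Δ_L(z)(1 ⊗ z)). Then (H, L) is a partial matched pair if and only if (i) xz = zxz for all x ∈ L and (ii) Σ λ(h₁)h₂λ(h₃) = Σ λ(h₁)h₂ for all h ∈ H. -/

import Mathlib

open TensorProduct LinearMap

namespace PartialHopf

variable (k : Type*) [Field k]

section Action

variable (H A : Type*) [Ring H] [HopfAlgebra k H] [Ring A] [Algebra k A]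

/-- `A` is a left partial `H`-module algebra via the bilinear action `act`
(Definition 2.1 / Caenepeel-Janssen): `1 ⇀ a = a`,
`h ⇀ (ab) = Σ (h₁ ⇀ a)(h₂ ⇀ b)` and `h ⇀ (g ⇀ a) = Σ (h₁ ⇀ 1)(h₂g ⇀ a)`. -/
structure IsPartialAction (act : H →ₗ[k] A →ₗ[k] A) : Prop where
  one_act : ∀ a : A, act 1 a = a
  act_mul : ∀ (h : H) (a b : A), act h (a * b)
      = LinearMap.mul' k A
          ((TensorProduct.map (act.flip a) (act.flip b)) (Coalgebra.comul (R := k) h))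
  act_act : ∀ (h g : H) (a : A), act h (act g a)
      = LinearMap.mul' k A
          ((TensorProduct.map (act.flip 1) ((act.flip a) ∘ₗ (LinearMap.mulRight k g)))
            (Coalgebra.comul (R := k) h))

end Action

section Coaction

variable (H C : Type*) [Ring H] [HopfAlgebra k H]
  [AddCommGroup C] [Module k C] [Coalgebra k C]

/-- Auxiliary map sending `Σ c ⊗ d` to `Σ c⁰ ⊗ d⁰ ⊗ c¹d¹`. -/
noncomputable def coactPairMul (ρ : C →ₗ[k] C ⊗[k] H) :
    C ⊗[k] C →ₗ[k] (C ⊗[k] C) ⊗[k] H :=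
  (LinearMap.lTensor (C ⊗[k] C) (LinearMap.mul' k H))
    ∘ₗ (TensorProduct.tensorTensorTensorComm k C H C H).toLinearMap
    ∘ₗ (TensorProduct.map ρ ρ)

/-- Auxiliary map sending `c` to `Σ c₁⁰ ⊗ (c₁¹)₁ ⊗ (c₁¹)₂ ε_C(c₂⁰) c₂¹`. -/
noncomputable def coactRight (ρ : C →ₗ[k] C ⊗[k] H) : C →ₗ[k] (C ⊗[k] H) ⊗[k] H :=
  (TensorProduct.assoc k C H H).symm.toLinearMap
    ∘ₗ (LinearMap.lTensor C
        ((LinearMap.lTensor H (LinearMap.mul' k H)) ∘ₗ (TensorProduct.assoc k H H H).toLinearMap))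
    ∘ₗ (TensorProduct.assoc k C (H ⊗[k] H) H).toLinearMap
    ∘ₗ (TensorProduct.map ((LinearMap.lTensor C (Coalgebra.comul (R := k))) ∘ₗ ρ)
          ((TensorProduct.lid k H).toLinearMap
            ∘ₗ (LinearMap.rTensor H (Coalgebra.counit (R := k))) ∘ₗ ρ))
    ∘ₗ (Coalgebra.comul (R := k))

/-- `C` is a right partial `H`-comodule coalgebra via `ρ` (Definition 2.3 / Batista-Vercruysse):
`(id ⊗ ε_H)ρ(c) = c`, `(Δ_C ⊗ id)ρ(c) = Σ c₁⁰ ⊗ c₂⁰ ⊗ c₁¹c₂¹` and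
`(ρ ⊗ id)ρ(c) = Σ c₁⁰ ⊗ (c₁¹)₁ ⊗ (c₁¹)₂ ε_C(c₂⁰)c₂¹`. -/
structure IsPartialCoaction (ρ : C →ₗ[k] C ⊗[k] H) : Prop where
  tensor_counit : ∀ c : C,
    (TensorProduct.rid k C) ((LinearMap.lTensor C (Coalgebra.counit (R := k))) (ρ c)) = c
  comul_coact : ∀ c : C,
    (LinearMap.rTensor H (Coalgebra.comul (R := k))) (ρ c)
      = coactPairMul k H C ρ (Coalgebra.comul (R := k) c)
  coact_coact : ∀ c : C,
    (LinearMap.rTensor H ρ) (ρ c) = coactRight k H C ρ c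

end Coaction

end PartialHopf
namespace PartialHopf
variable (k : Type*) [Field k]

section MatchedPair

variable (H L : Type*) [Ring H] [HopfAlgebra k H] [Ring L] [HopfAlgebra k L]

/-- Generic swap `(m ⊗ n) ⊗ p ↦ (m ⊗ p) ⊗ n`. -/
noncomputable def swapR (M N P : Type*) [AddCommGroup M] [AddCommGroup N] [AddCommGroup P]
    [Module k M] [Module k N] [Module k P] :
    (M ⊗[k] N) ⊗[k] P →ₗ[k] (M ⊗[k] P) ⊗[k] N :=
  (TensorProduct.assoc k M P N).symm.toLinearMap
    ∘ₗ (LinearMap.lTensor M (TensorProduct.comm k N P).toLinearMap)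
    ∘ₗ (TensorProduct.assoc k M N P).toLinearMap

variable {H L}

/-- The bilinear action as a map on the tensor product. -/
noncomputable def actT (act : H →ₗ[k] L →ₗ[k] L) : H ⊗[k] L →ₗ[k] L :=
  TensorProduct.lift act

/-- Shuffle `(x₁ ⊗ x₂) ⊗ (a ⊗ y) ↦ a ⊗ (x₁ ⊗ x₂y)`. -/
noncomputable def psiMap : (L ⊗[k] L) ⊗[k] (H ⊗[k] L) →ₗ[k] H ⊗[k] (L ⊗[k] L) :=
  (TensorProduct.assoc k H L L).toLinearMap
    ∘ₗ (TensorProduct.map (TensorProduct.comm k L H).toLinearMap (LinearMap.mul' k L))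
    ∘ₗ (TensorProduct.tensorTensorTensorComm k L L H L).toLinearMap

/-- `h ↦ Σ (h₂g)⁰ ⊗ (h₁ ⇀ x)₁ ⊗ (h₁ ⇀ x)₂ (h₂g)¹`: the left hand side of the
compatibility condition (iii) of a partial matched pair. -/
noncomputable def mpLHS (act : H →ₗ[k] L →ₗ[k] L) (ρ : H →ₗ[k] H ⊗[k] L) (g : H) (x : L) :
    H →ₗ[k] H ⊗[k] (L ⊗[k] L) :=
  psiMap k ∘ₗ (TensorProduct.map ((Coalgebra.comul (R := k)) ∘ₗ act.flip x)
      (ρ ∘ₗ LinearMap.mulRight k g)) ∘ₗ (Coalgebra.comul (R := k))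

/-- `h ⊗ x ↦ (h⁰ ⇀ x) ⊗ h¹`. -/
noncomputable def phiB (act : H →ₗ[k] L →ₗ[k] L) (ρ : H →ₗ[k] H ⊗[k] L) :
    H ⊗[k] L →ₗ[k] L ⊗[k] L :=
  (LinearMap.rTensor L (actT k act)) ∘ₗ (swapR k H L L) ∘ₗ (LinearMap.rTensor L ρ)

/-- `(h₁ ⊗ h₂) ⊗ (x₁ ⊗ x₂) ↦ (h₁⁰ ⇀ x₁) ⊗ h₁¹(h₂ ⇀ x₂)`. -/
noncomputable def bAssemble (act : H →ₗ[k] L →ₗ[k] L) (ρ : H →ₗ[k] H ⊗[k] L) :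
    (H ⊗[k] H) ⊗[k] (L ⊗[k] L) →ₗ[k] L ⊗[k] L :=
  (LinearMap.lTensor L (LinearMap.mul' k L))
    ∘ₗ (TensorProduct.assoc k L L L).toLinearMap
    ∘ₗ (TensorProduct.map (phiB k act ρ) (actT k act))
    ∘ₗ (TensorProduct.tensorTensorTensorComm k H H L L).toLinearMap

/-- `h ↦ Σ (h₁⁰ ⇀ x₁) ⊗ h₁¹(h₂ ⇀ x₂)`. -/
noncomputable def betaMap (act : H →ₗ[k] L →ₗ[k] L) (ρ : H →ₗ[k] H ⊗[k] L) (x : L) :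
    H →ₗ[k] L ⊗[k] L :=
  (bAssemble k act ρ)
    ∘ₗ ((TensorProduct.mk k (H ⊗[k] H) (L ⊗[k] L)).flip (Coalgebra.comul (R := k) x))
    ∘ₗ (Coalgebra.comul (R := k))

/-- `h₁ ⊗ g ↦ h₁⁰g ⊗ h₁¹`. -/
noncomputable def phiC (ρ : H →ₗ[k] H ⊗[k] L) : H ⊗[k] H →ₗ[k] H ⊗[k] L :=
  (LinearMap.rTensor L (LinearMap.mul' k H)) ∘ₗ (swapR k H L H) ∘ₗ (LinearMap.rTensor H ρ)

/-- `(h₁ ⊗ h₂) ⊗ (g⁰ ⊗ g¹) ↦ h₁⁰g⁰ ⊗ h₁¹(h₂ ⇀ g¹)`. -/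
noncomputable def cAssemble (act : H →ₗ[k] L →ₗ[k] L) (ρ : H →ₗ[k] H ⊗[k] L) :
    (H ⊗[k] H) ⊗[k] (H ⊗[k] L) →ₗ[k] H ⊗[k] L :=
  (LinearMap.lTensor H (LinearMap.mul' k L))
    ∘ₗ (TensorProduct.assoc k H L L).toLinearMap
    ∘ₗ (TensorProduct.map (phiC k ρ) (actT k act))
    ∘ₗ (TensorProduct.tensorTensorTensorComm k H H H L).toLinearMap

/-- `h ↦ Σ h₁⁰g⁰ ⊗ h₁¹(h₂ ⇀ g¹)`. -/
noncomputable def gammaMap (act : H →ₗ[k] L →ₗ[k] L) (ρ : H →ₗ[k] H ⊗[k] L) (g : H) :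
    H →ₗ[k] H ⊗[k] L :=
  (cAssemble k act ρ)
    ∘ₗ ((TensorProduct.mk k (H ⊗[k] H) (H ⊗[k] L)).flip (ρ g))
    ∘ₗ (Coalgebra.comul (R := k))

/-- `h ↦ Σ h₃⁰g⁰ ⊗ (h₁⁰ ⇀ x₁) ⊗ h₁¹(h₂ ⇀ x₂)h₃¹(h₄ ⇀ g¹)`: the right hand side of the
compatibility condition (iii) of a partial matched pair. -/
noncomputable def mpRHS (act : H →ₗ[k] L →ₗ[k] L) (ρ : H →ₗ[k] H ⊗[k] L) (g : H) (x : L) :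
    H →ₗ[k] H ⊗[k] (L ⊗[k] L) :=
  psiMap k ∘ₗ (TensorProduct.map (betaMap k act ρ x) (gammaMap k act ρ g))
    ∘ₗ (Coalgebra.comul (R := k))

/-- `h ↦ Σ ε_H(h⁰) h¹`. -/
noncomputable def coactCounit (ρ : H →ₗ[k] H ⊗[k] L) : H →ₗ[k] L :=
  (TensorProduct.lid k L).toLinearMap
    ∘ₗ (LinearMap.rTensor L (Coalgebra.counit (R := k))) ∘ₗ ρ

variable (H L)

/-- Definition 3.1: `(H, L)` is a partial matched pair of Hopf algebras. -/
structure IsPartialMatchedPair (act : H →ₗ[k] L →ₗ[k] L) (ρ : H →ₗ[k] H ⊗[k] L) : Prop where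
  action : IsPartialAction k H L act
  coaction : IsPartialCoaction k L H ρ
  compat : ∀ (h g : H) (x : L), mpLHS k act ρ g x h = mpRHS k act ρ g x h
  counit_act : ∀ (h : H) (x : L),
    Coalgebra.counit (R := k) (act h x)
      = Coalgebra.counit (R := k) (act h 1) * Coalgebra.counit (R := k) x
  coact_one : ρ 1 = (1 : H) ⊗ₜ[k] (coactCounit k ρ (1 : H))

/-- Definition 3.5: quasi-abelian condition
`Σ h₂⁰ ⊗ (h₁ ⇀ x)h₂¹ = Σ h₁⁰ ⊗ h₁¹(h₂ ⇀ x)`. -/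
def IsQuasiAbelian (act : H →ₗ[k] L →ₗ[k] L) (ρ : H →ₗ[k] H ⊗[k] L) : Prop :=
  ∀ (h : H) (x : L),
    ((LinearMap.lTensor H (LinearMap.mul' k L))
        ∘ₗ (TensorProduct.assoc k H L L).toLinearMap
        ∘ₗ (LinearMap.rTensor L (TensorProduct.comm k L H).toLinearMap)
        ∘ₗ (TensorProduct.assoc k L H L).symm.toLinearMap)
      ((TensorProduct.map (act.flip x) ρ) (Coalgebra.comul (R := k) h))
    = ((LinearMap.lTensor H (LinearMap.mul' k L))
        ∘ₗ (TensorProduct.assoc k H L L).toLinearMap)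
      ((TensorProduct.map ρ (act.flip x)) (Coalgebra.comul (R := k) h))

end MatchedPair

set_option maxHeartbeats 1000000
set_option synthInstance.maxHeartbeats 400000

section AuxProof

variable {k H L : Type*} [Field k] [Ring H] [HopfAlgebra k H] [Ring L] [HopfAlgebra k L]

namespace Scalar

variable (lam : H →ₗ[k] k) (z : L)

lemma actT_tmul (h : H) (x : L) :
    actT k ((LinearMap.lsmul k L) ∘ₗ lam) (h ⊗ₜ[k] x) = lam h • x := by
  simp [actT]

lemma psi_tmul (s : L ⊗[k] L) (a : H) (y : L) :
    psiMap k (s ⊗ₜ[k] (a ⊗ₜ[k] y))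
      = a ⊗ₜ[k] ((LinearMap.lTensor L (LinearMap.mulRight k y)) s) := by
  induction s using TensorProduct.induction_on with
  | zero => simp
  | tmul u v => simp [psiMap, LinearMap.mul'_apply]
  | add u v hu hv =>
      simp only [TensorProduct.add_tmul, map_add, hu, hv, TensorProduct.tmul_add]

lemma mul_one_tmul (s : L ⊗[k] L) (y : L) :
    s * ((1 : L) ⊗ₜ[k] y) = (LinearMap.lTensor L (LinearMap.mulRight k y)) s := by
  induction s using TensorProduct.induction_on with
  | zero => simp [zero_mul]
  | tmul u v => simp [Algebra.TensorProduct.tmul_mul_tmul]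
  | add u v hu hv => simp only [add_mul, map_add, hu, hv]

lemma counit_lTensor (f : L →ₗ[k] L) (s : L ⊗[k] L) :
    (TensorProduct.lid k L)
        ((LinearMap.rTensor L (Coalgebra.counit (R := k))) ((LinearMap.lTensor L f) s))
      = f ((TensorProduct.lid k L)
        ((LinearMap.rTensor L (Coalgebra.counit (R := k))) s)) := by
  induction s using TensorProduct.induction_on with
  | zero => simp
  | tmul u v => simp
  | add u v hu hv => simp only [map_add, hu, hv]

lemma counit_comul_lid (x : L) :
    (TensorProduct.lid k L)
        ((LinearMap.rTensor L (Coalgebra.counit (R := k))) (Coalgebra.comul (R := k) x))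
      = x := by
  rw [Coalgebra.rTensor_counit_comul]; simp

variable (hz1 : Coalgebra.counit (R := k) z = 1)
  (hz2 : z ⊗ₜ[k] z = Coalgebra.comul (R := k) z * ((1 : L) ⊗ₜ[k] z))

include hz1 hz2 in
lemma z_idem : z * z = z := by
  have h1 : z ⊗ₜ[k] z
      = (LinearMap.lTensor L (LinearMap.mulRight k z)) (Coalgebra.comul (R := k) z) := by
    rw [hz2, mul_one_tmul]
  have h2 := congrArg (fun s => (TensorProduct.lid k L)
      ((LinearMap.rTensor L (Coalgebra.counit (R := k))) s)) h1
  rw [counit_lTensor, counit_comul_lid] at h2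
  simp only [LinearMap.rTensor_tmul, TensorProduct.lid_tmul, hz1, one_smul,
    LinearMap.mulRight_apply] at h2
  exact h2.symm

variable (hl1 : lam 1 = 1)
  (hl2 : ∀ g h : H,
      lam h * lam g
        = LinearMap.mul' k k
            ((TensorProduct.map lam (lam ∘ₗ LinearMap.mulRight k g))
              (Coalgebra.comul (R := k) h)))

include hl1 hl2 in
lemma lam_comul (h : H) :
    LinearMap.mul' k k ((TensorProduct.map lam lam) (Coalgebra.comul (R := k) h)) = lam h := by
  have := (hl2 1 h).symm
  rwa [hl1, mul_one, LinearMap.mulRight_one, LinearMap.comp_id] at this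

/-- `h ↦ Σ λ(h₁) h₂`. -/
noncomputable def lamOne : H →ₗ[k] H :=
  (TensorProduct.lid k H).toLinearMap ∘ₗ LinearMap.rTensor H lam ∘ₗ Coalgebra.comul (R := k)

/-- `h ↦ Σ h₁ λ(h₂)`. -/
noncomputable def lamTwo : H →ₗ[k] H :=
  (TensorProduct.rid k H).toLinearMap ∘ₗ LinearMap.lTensor H lam ∘ₗ Coalgebra.comul (R := k)

/-- `h ↦ Σ λ(h₁) h₂ λ(h₃)`. -/
noncomputable def lamThree : H →ₗ[k] H :=
  (TensorProduct.lid k H).toLinearMap ∘ₗ LinearMap.rTensor H lam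
    ∘ₗ LinearMap.lTensor H (lamTwo lam) ∘ₗ Coalgebra.comul (R := k)

include hl1 in
lemma lamOne_one : lamOne lam (1 : H) = 1 := by
  simp [lamOne, Bialgebra.comul_one, Algebra.TensorProduct.one_def, hl1]

include hl1 in
lemma lamTwo_one : lamTwo lam (1 : H) = 1 := by
  simp [lamTwo, Bialgebra.comul_one, Algebra.TensorProduct.one_def, hl1]

include hl1 in
lemma lamThree_one : lamThree lam (1 : H) = 1 := by
  simp [lamThree, Bialgebra.comul_one, Algebra.TensorProduct.one_def, hl1,
    lamTwo_one lam hl1]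

lemma stmt_eq_lamThree (h : H) :
    (TensorProduct.lid k H)
        ((TensorProduct.rid k (k ⊗[k] H))
          ((TensorProduct.map (TensorProduct.map lam LinearMap.id) lam)
            ((LinearMap.rTensor H (Coalgebra.comul (R := k)))
              (Coalgebra.comul (R := k) h))))
      = lamThree lam h := by
  have key : ((TensorProduct.lid k H).toLinearMap
        ∘ₗ (TensorProduct.rid k (k ⊗[k] H)).toLinearMap
        ∘ₗ (TensorProduct.map (TensorProduct.map lam LinearMap.id) lam))
      = ((TensorProduct.lid k H).toLinearMap ∘ₗ LinearMap.rTensor H lam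
          ∘ₗ LinearMap.lTensor H
              ((TensorProduct.rid k H).toLinearMap ∘ₗ LinearMap.lTensor H lam)
          ∘ₗ (TensorProduct.assoc k H H H).toLinearMap) := by
    apply TensorProduct.ext_threefold
    intro a b c
    simp [TensorProduct.smul_tmul', mul_comm, smul_smul]
  have h1 := congrFun (congrArg DFunLike.coe key)
    ((LinearMap.rTensor H (Coalgebra.comul (R := k))) (Coalgebra.comul (R := k) h))
  simp only [LinearMap.coe_comp, Function.comp_apply, LinearEquiv.coe_coe] at h1
  rw [h1, Coalgebra.coassoc_apply]
  simp only [lamThree, lamTwo, LinearMap.coe_comp, Function.comp_apply, LinearEquiv.coe_coe]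
  rw [← LinearMap.lTensor_comp_apply]
  rfl

lemma stmt_eq_lamOne (h : H) :
    (TensorProduct.lid k H)
        ((LinearMap.rTensor H lam) (Coalgebra.comul (R := k) h)) = lamOne lam h := rfl

lemma phiB_tmul (h : H) (x : L) :
    phiB k ((LinearMap.lsmul k L) ∘ₗ lam) ((TensorProduct.mk k H L).flip z) (h ⊗ₜ[k] x)
      = (lam h • x) ⊗ₜ[k] z := by
  simp [phiB, swapR, actT, TensorProduct.smul_tmul']

lemma phiC_tmul (h g : H) :
    phiC k ((TensorProduct.mk k H L).flip z) (h ⊗ₜ[k] g) = (h * g) ⊗ₜ[k] z := by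
  simp [phiC, swapR, LinearMap.mul'_apply]

lemma cpm_apply (t : H ⊗[k] H) :
    coactPairMul k L H ((TensorProduct.mk k H L).flip z) t = t ⊗ₜ[k] (z * z) := by
  induction t using TensorProduct.induction_on with
  | zero => simp
  | tmul a b => simp [coactPairMul, LinearMap.mul'_apply]
  | add a b ha hb => simp only [map_add, ha, hb, TensorProduct.add_tmul]

lemma inner_mul (s : L ⊗[k] L) (y : L) :
    (LinearMap.lTensor L (LinearMap.mul' k L)) ((TensorProduct.assoc k L L L) (s ⊗ₜ[k] y))
      = (LinearMap.lTensor L (LinearMap.mulRight k y)) s := by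
  induction s using TensorProduct.induction_on with
  | zero => simp
  | tmul u v => simp [LinearMap.mul'_apply]
  | add u v hu hv => simp only [TensorProduct.add_tmul, map_add, hu, hv]

include hz2 in
lemma coactRight_eq (h : H) :
    coactRight k L H ((TensorProduct.mk k H L).flip z) h = (h ⊗ₜ[k] z) ⊗ₜ[k] z := by
  have key : ∀ t : H ⊗[k] H,
      (((TensorProduct.assoc k H L L).symm.toLinearMap
        ∘ₗ (LinearMap.lTensor H
            ((LinearMap.lTensor L (LinearMap.mul' k L))
              ∘ₗ (TensorProduct.assoc k L L L).toLinearMap))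
        ∘ₗ (TensorProduct.assoc k H (L ⊗[k] L) L).toLinearMap
        ∘ₗ (TensorProduct.map
              ((LinearMap.lTensor H (Coalgebra.comul (R := k)))
                ∘ₗ ((TensorProduct.mk k H L).flip z))
              ((TensorProduct.lid k L).toLinearMap
                ∘ₗ (LinearMap.rTensor L (Coalgebra.counit (R := k)))
                ∘ₗ ((TensorProduct.mk k H L).flip z)))) t)
      = (((TensorProduct.rid k H) ((LinearMap.lTensor H (Coalgebra.counit (R := k))) t))
          ⊗ₜ[k] z) ⊗ₜ[k] z := by
    intro t
    induction t using TensorProduct.induction_on with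
    | zero => simp
    | tmul a b =>
        simp only [LinearMap.coe_comp, Function.comp_apply, LinearEquiv.coe_coe,
          TensorProduct.map_tmul, TensorProduct.mk_apply, LinearMap.flip_apply,
          LinearMap.lTensor_tmul, LinearMap.rTensor_tmul, TensorProduct.lid_tmul,
          TensorProduct.rid_tmul, TensorProduct.tmul_smul, TensorProduct.assoc_tmul,
          map_smul]
        rw [inner_mul, ← mul_one_tmul, ← hz2]
        simp [TensorProduct.smul_tmul']
    | add a b ha hb => simp only [map_add, ha, hb, TensorProduct.add_tmul]
  have : coactRight k L H ((TensorProduct.mk k H L).flip z) h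
      = (((TensorProduct.rid k H)
          ((LinearMap.lTensor H (Coalgebra.counit (R := k))) (Coalgebra.comul (R := k) h)))
          ⊗ₜ[k] z) ⊗ₜ[k] z := by
    rw [coactRight]
    exact key (Coalgebra.comul (R := k) h)
  rw [this, Coalgebra.lTensor_counit_comul]
  simp

lemma bAssemble_apply (t : H ⊗[k] H) (s : L ⊗[k] L) :
    bAssemble k ((LinearMap.lsmul k L) ∘ₗ lam) ((TensorProduct.mk k H L).flip z) (t ⊗ₜ[k] s)
      = (LinearMap.mul' k k ((TensorProduct.map lam lam) t))
          • ((LinearMap.lTensor L (LinearMap.mulLeft k z)) s) := by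
  induction t using TensorProduct.induction_on with
  | zero => simp
  | tmul a b =>
      induction s using TensorProduct.induction_on with
      | zero => simp
      | tmul u v =>
          simp only [bAssemble, LinearMap.coe_comp, Function.comp_apply, LinearEquiv.coe_coe,
            TensorProduct.tensorTensorTensorComm_tmul, TensorProduct.map_tmul,
            phiB_tmul lam z, actT_tmul lam, TensorProduct.assoc_tmul,
            LinearMap.lTensor_tmul, LinearMap.mul'_apply, LinearMap.mulLeft_apply,
            TensorProduct.smul_tmul', TensorProduct.tmul_smul, map_smul, smul_smul]
          rw [mul_comm (lam b) (lam a)]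
      | add u v hu hv =>
          simp only [TensorProduct.tmul_add, map_add, hu, hv, smul_add]
  | add a b ha hb =>
      simp only [TensorProduct.add_tmul, map_add, ha, hb, smul_add, add_smul]

include hl1 hl2 in
lemma betaMap_apply (x : L) (h : H) :
    betaMap k ((LinearMap.lsmul k L) ∘ₗ lam) ((TensorProduct.mk k H L).flip z) x h
      = lam h • ((LinearMap.lTensor L (LinearMap.mulLeft k z)) (Coalgebra.comul (R := k) x)) := by
  rw [betaMap]
  simp only [LinearMap.coe_comp, Function.comp_apply, LinearMap.flip_apply,
    TensorProduct.mk_apply]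
  rw [bAssemble_apply lam z, lam_comul lam hl1 hl2]

lemma cAssemble_apply (t : H ⊗[k] H) (g : H) (y : L) :
    cAssemble k ((LinearMap.lsmul k L) ∘ₗ lam) ((TensorProduct.mk k H L).flip z)
        (t ⊗ₜ[k] (g ⊗ₜ[k] y))
      = (((TensorProduct.rid k H) ((LinearMap.lTensor H lam) t)) * g) ⊗ₜ[k] (z * y) := by
  induction t using TensorProduct.induction_on with
  | zero => simp [zero_mul]
  | tmul a b =>
      simp only [cAssemble, LinearMap.coe_comp, Function.comp_apply, LinearEquiv.coe_coe,
        TensorProduct.tensorTensorTensorComm_tmul, TensorProduct.map_tmul,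
        phiC_tmul z, actT_tmul lam, TensorProduct.assoc_tmul,
        LinearMap.lTensor_tmul, LinearMap.mul'_apply, TensorProduct.rid_tmul,
        TensorProduct.tmul_smul, mul_smul_comm, TensorProduct.smul_tmul', smul_mul_assoc]
  | add a b ha hb =>
      simp only [TensorProduct.add_tmul, map_add, ha, hb, add_mul]

include hz1 hz2 in
lemma gammaMap_apply (g : H) (h : H) :
    gammaMap k ((LinearMap.lsmul k L) ∘ₗ lam) ((TensorProduct.mk k H L).flip z) g h
      = (lamTwo lam h * g) ⊗ₜ[k] z := by
  rw [gammaMap]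
  simp only [LinearMap.coe_comp, Function.comp_apply, LinearMap.flip_apply,
    TensorProduct.mk_apply]
  rw [cAssemble_apply lam z, z_idem z hz1 hz2]
  rfl

lemma mpLHS_apply (g : H) (x : L) (h : H) :
    mpLHS k ((LinearMap.lsmul k L) ∘ₗ lam) ((TensorProduct.mk k H L).flip z) g x h
      = (lamOne lam h * g)
          ⊗ₜ[k] ((LinearMap.lTensor L (LinearMap.mulRight k z)) (Coalgebra.comul (R := k) x)) := by
  have key : ∀ t : H ⊗[k] H,
      psiMap k ((TensorProduct.map
          ((Coalgebra.comul (R := k)) ∘ₗ ((LinearMap.lsmul k L) ∘ₗ lam).flip x)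
          (((TensorProduct.mk k H L).flip z) ∘ₗ LinearMap.mulRight k g)) t)
      = (((TensorProduct.lid k H) ((LinearMap.rTensor H lam) t)) * g)
          ⊗ₜ[k] ((LinearMap.lTensor L (LinearMap.mulRight k z)) (Coalgebra.comul (R := k) x)) := by
    intro t
    induction t using TensorProduct.induction_on with
    | zero => simp [zero_mul]
    | tmul a b =>
        simp only [TensorProduct.map_tmul, LinearMap.coe_comp, Function.comp_apply,
          LinearMap.flip_apply, LinearMap.lsmul_apply, map_smul, TensorProduct.mk_apply,
          LinearMap.mulRight_apply]
        rw [← TensorProduct.smul_tmul', map_smul, psi_tmul]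
        simp [TensorProduct.smul_tmul', smul_mul_assoc]
    | add a b ha hb => simp only [map_add, ha, hb, add_mul, TensorProduct.add_tmul]
  rw [mpLHS]
  simp only [LinearMap.coe_comp, Function.comp_apply]
  rw [key]
  rfl

include hl1 hl2 hz1 hz2 in
lemma mpRHS_apply (g : H) (x : L) (h : H) :
    mpRHS k ((LinearMap.lsmul k L) ∘ₗ lam) ((TensorProduct.mk k H L).flip z) g x h
      = (lamThree lam h * g)
          ⊗ₜ[k] ((LinearMap.lTensor L (LinearMap.mulRight k z))
            ((LinearMap.lTensor L (LinearMap.mulLeft k z)) (Coalgebra.comul (R := k) x))) := by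
  have key : ∀ t : H ⊗[k] H,
      psiMap k ((TensorProduct.map
          (betaMap k ((LinearMap.lsmul k L) ∘ₗ lam) ((TensorProduct.mk k H L).flip z) x)
          (gammaMap k ((LinearMap.lsmul k L) ∘ₗ lam) ((TensorProduct.mk k H L).flip z) g)) t)
      = (((TensorProduct.lid k H)
            ((LinearMap.rTensor H lam) ((LinearMap.lTensor H (lamTwo lam)) t))) * g)
          ⊗ₜ[k] ((LinearMap.lTensor L (LinearMap.mulRight k z))
            ((LinearMap.lTensor L (LinearMap.mulLeft k z)) (Coalgebra.comul (R := k) x))) := by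
    intro t
    induction t using TensorProduct.induction_on with
    | zero => simp [zero_mul]
    | tmul a b =>
        rw [TensorProduct.map_tmul, betaMap_apply lam z hl1 hl2,
          gammaMap_apply lam z hz1 hz2, ← TensorProduct.smul_tmul', map_smul, psi_tmul]
        simp [TensorProduct.smul_tmul', smul_mul_assoc]
    | add a b ha hb => simp only [map_add, ha, hb, add_mul, TensorProduct.add_tmul]
  rw [mpRHS]
  simp only [LinearMap.coe_comp, Function.comp_apply]
  rw [key]
  rfl

end Scalar

end AuxProof

/-- Proposition 4.5: with the partial action `h ⇀ x = λ(h)x` and partial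
coaction `ρ(h) = h ⊗ z` of Examples 2.2 and 2.4, `(H, L)` is a partial matched pair if and
only if (i) `xz = zxz` for all `x ∈ L` and (ii) `Σ λ(h₁)h₂λ(h₃) = Σ λ(h₁)h₂` for all
`h ∈ H`. -/
theorem partialMatchedPair_scalar_iff
    {k H L : Type*} [Field k] [Ring H] [HopfAlgebra k H] [Ring L] [HopfAlgebra k L]
    (lam : H →ₗ[k] k) (z : L)
    (hl1 : lam 1 = 1)
    (hl2 : ∀ g h : H,
      lam h * lam g
        = LinearMap.mul' k k
            ((TensorProduct.map lam (lam ∘ₗ LinearMap.mulRight k g))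
              (Coalgebra.comul (R := k) h)))
    (hz1 : Coalgebra.counit (R := k) z = 1)
    (hz2 : z ⊗ₜ[k] z = Coalgebra.comul (R := k) z * ((1 : L) ⊗ₜ[k] z)) :
    IsPartialMatchedPair k H L ((LinearMap.lsmul k L) ∘ₗ lam) ((TensorProduct.mk k H L).flip z)
      ↔ ((∀ x : L, x * z = z * x * z) ∧
          ∀ h : H,
            (TensorProduct.lid k H)
              ((TensorProduct.rid k (k ⊗[k] H))
                ((TensorProduct.map (TensorProduct.map lam LinearMap.id) lam)
                  ((LinearMap.rTensor H (Coalgebra.comul (R := k)))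
                    (Coalgebra.comul (R := k) h))))
              = (TensorProduct.lid k H)
                  ((LinearMap.rTensor H lam) (Coalgebra.comul (R := k) h))) := by
  constructor
  · intro hmp
    have compat := hmp.compat
    constructor
    · intro x
      have h1 := compat 1 1 x
      rw [Scalar.mpLHS_apply lam z, Scalar.mpRHS_apply lam z hz1 hz2 hl1 hl2,
        Scalar.lamOne_one lam hl1, Scalar.lamThree_one lam hl1, one_mul] at h1
      have h2 := congrArg (fun s => (TensorProduct.lid k (L ⊗[k] L))
          ((LinearMap.rTensor (L ⊗[k] L) (Coalgebra.counit (R := k) (A := H))) s)) h1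
      simp only [LinearMap.rTensor_tmul, TensorProduct.lid_tmul, Bialgebra.counit_one,
        one_smul] at h2
      have h3 := congrArg (fun s => (TensorProduct.lid k L)
          ((LinearMap.rTensor L (Coalgebra.counit (R := k))) s)) h2
      rw [Scalar.counit_lTensor, Scalar.counit_lTensor, Scalar.counit_lTensor,
        Scalar.counit_comul_lid] at h3
      simpa using h3
    · intro h
      have h1 := compat h 1 1
      rw [Scalar.mpLHS_apply lam z, Scalar.mpRHS_apply lam z hz1 hz2 hl1 hl2, mul_one, mul_one,
        Bialgebra.comul_one, Algebra.TensorProduct.one_def] at h1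
      simp only [LinearMap.lTensor_tmul, LinearMap.mulRight_apply, LinearMap.mulLeft_apply,
        one_mul, mul_one, Scalar.z_idem z hz1 hz2] at h1
      have h2 := congrArg (fun s => (TensorProduct.rid k H)
          ((LinearMap.lTensor H
            ((Coalgebra.counit (R := k) (A := L)) ∘ₗ LinearMap.mul' k L)) s)) h1
      simp only [LinearMap.lTensor_tmul, LinearMap.coe_comp, Function.comp_apply,
        LinearMap.mul'_apply, one_mul, hz1, TensorProduct.rid_tmul, one_smul] at h2
      rw [Scalar.stmt_eq_lamThree, Scalar.stmt_eq_lamOne]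
      exact h2.symm
  · rintro ⟨hi, hii⟩
    have hmul : (LinearMap.mulRight k z) ∘ₗ (LinearMap.mulLeft k z) = LinearMap.mulRight k z := by
      ext x
      simp only [LinearMap.coe_comp, Function.comp_apply, LinearMap.mulLeft_apply,
        LinearMap.mulRight_apply]
      exact (hi x).symm
    have h13 : ∀ h : H, Scalar.lamOne lam h = Scalar.lamThree lam h := by
      intro h
      rw [← Scalar.stmt_eq_lamThree, ← Scalar.stmt_eq_lamOne lam h]
      exact (hii h).symm
    refine ⟨⟨?_, ?_, ?_⟩, ⟨?_, ?_, ?_⟩, ?_, ?_, ?_⟩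
    · intro a
      simp [hl1]
    · intro h a b
      have key : ∀ t : H ⊗[k] H,
          LinearMap.mul' k L ((TensorProduct.map (((LinearMap.lsmul k L) ∘ₗ lam).flip a)
            (((LinearMap.lsmul k L) ∘ₗ lam).flip b)) t)
          = (LinearMap.mul' k k ((TensorProduct.map lam lam) t)) • (a * b) := by
        intro t
        induction t using TensorProduct.induction_on with
        | zero => simp
        | tmul c d =>
            simp [LinearMap.mul'_apply, smul_mul_assoc, mul_smul_comm, smul_smul]
            rw [mul_comm (lam d) (lam c)]
        | add c d hc hd => simp only [map_add, hc, hd, add_smul]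
      rw [key, Scalar.lam_comul lam hl1 hl2]
      simp
    · intro h g a
      have key : ∀ t : H ⊗[k] H,
          LinearMap.mul' k L ((TensorProduct.map (((LinearMap.lsmul k L) ∘ₗ lam).flip 1)
            ((((LinearMap.lsmul k L) ∘ₗ lam).flip a) ∘ₗ (LinearMap.mulRight k g))) t)
          = (LinearMap.mul' k k
              ((TensorProduct.map lam (lam ∘ₗ LinearMap.mulRight k g)) t)) • a := by
        intro t
        induction t using TensorProduct.induction_on with
        | zero => simp
        | tmul c d =>
            simp [LinearMap.mul'_apply, smul_mul_assoc, one_mul, smul_smul]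
            rw [mul_comm (lam (d * g)) (lam c)]
        | add c d hc hd => simp only [map_add, hc, hd, add_smul]
      rw [key, ← hl2]
      simp [smul_smul]
      rw [mul_comm (lam g) (lam h)]
    · intro c
      simp [hz1]
    · intro c
      rw [Scalar.cpm_apply z, Scalar.z_idem z hz1 hz2]
      simp
    · intro c
      rw [Scalar.coactRight_eq z hz2]
      simp
    · intro h g x
      rw [Scalar.mpLHS_apply lam z, Scalar.mpRHS_apply lam z hz1 hz2 hl1 hl2, h13 h,
        ← LinearMap.lTensor_comp_apply, hmul]
    · intro h x
      simp [smul_eq_mul]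
    · simp [coactCounit]

end PartialHopf
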